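/- The risky Black–Scholes formula 𝓑𝓢̂(t,S) := 𝓑𝓢(t,S) e^{−(λ_B(1−R_B)+λ_C(1−R_C)) t} satisfies, for every t ∈ (0,T) and S>0, the risky (nonlinear) Black–Scholes equation ∂_t𝓑𝓢̂ − (σ²S²/2)∂_{SS}𝓑𝓢̂ − r_R S ∂_S𝓑𝓢̂ + r 𝓑𝓢̂ + f(𝓑𝓢̂) = 0. -/

import Mathlib

/-- Standard normal cumulative distribution function. -/
noncomputable def Phi (x : ℝ) : ℝ :=
  (Real.sqrt (2 * Real.pi))⁻¹ * ∫ u in Set.Iic x, Real.exp (-u ^ 2 / 2)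

/-- `ζ₁ = (log(S/K) + (r_R + σ²/2)t)/(σ√t)`. -/
noncomputable def zeta1 (σ K r_R t S : ℝ) : ℝ :=
  (Real.log (S / K) + (r_R + σ ^ 2 / 2) * t) / (σ * Real.sqrt t)

/-- `ζ₂ = ζ₁ − σ√t`. -/
noncomputable def zeta2 (σ K r_R t S : ℝ) : ℝ :=
  zeta1 σ K r_R t S - σ * Real.sqrt t

/-- The Black–Scholes formula
`𝓑𝓢(t,S) = α S e^{−(r−r_R)t} Φ(αζ₁) − α K e^{−rt} Φ(αζ₂)` (t = time to maturity). -/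
noncomputable def BS (σ K r r_R α t S : ℝ) : ℝ :=
  α * S * Real.exp (-(r - r_R) * t) * Phi (α * zeta1 σ K r_R t S)
    - α * K * Real.exp (-r * t) * Phi (α * zeta2 σ K r_R t S)

/-- The XVA source term `f(v) = λ_B(1−R_B) min{v,0} + (λ_C(1−R_C)+s_F) max{v,0}`
with funding spread `s_F = (1−R_B)λ_B`. -/
noncomputable def fXVA (lB lC RB RC : ℝ) (v : ℝ) : ℝ :=
  lB * (1 - RB) * min v 0 + (lC * (1 - RC) + (1 - RB) * lB) * max v 0

/-!
Put `c = λ_B(1−R_B) + λ_C(1−R_C)`, so that `𝓑𝓢̂ = e^{−ct} 𝓑𝓢`. The price `𝓑𝓢` is nonnegative,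
hence `f(𝓑𝓢̂) = c 𝓑𝓢̂`, which cancels the term `−c 𝓑𝓢̂` coming from differentiating `e^{−ct}`;
what remains is `e^{−ct}` times the linear Black–Scholes operator applied to `𝓑𝓢`, which vanishes.

For the linear equation, `S e^{−(r−r_R)t} φ(ζ₁) = K e^{−rt} φ(ζ₂)` (with `φ = Φ'`) collapses the
density terms of the Greeks: `∂_S 𝓑𝓢 = α e^{−(r−r_R)t} Φ(αζ₁)`, and the only density term left in
`∂_t 𝓑𝓢` is `S e^{−(r−r_R)t} φ(ζ₁) σ/(2√t)`, which `σ²S²/2 · ∂_SS 𝓑𝓢` cancels.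

For nonnegativity, the call is nondecreasing in `S` and tends to `0` as `S → 0⁺`, and the put is
the call with spot and strike exchanged and rates `(r − r_R, −r_R)`.
-/

open Real Set Filter Topology MeasureTheory ProbabilityTheory

lemma gaussianPDFReal_zero_one (x : ℝ) :
    gaussianPDFReal 0 1 x = (√(2 * π))⁻¹ * exp (-x ^ 2 / 2) := by
  simp [gaussianPDFReal]

lemma gaussianPDFReal_zero_one_neg (x : ℝ) :
    gaussianPDFReal 0 1 (-x) = gaussianPDFReal 0 1 x := by
  simp [gaussianPDFReal]

lemma Phi_eq_setIntegral (x : ℝ) : Phi x = ∫ u in Iic x, gaussianPDFReal 0 1 u := by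
  simp_rw [gaussianPDFReal_zero_one, integral_const_mul, Phi]

lemma Phi_eq_cdf (x : ℝ) : Phi x = cdf (gaussianReal 0 1) x := by
  rw [cdf_eq_real, measureReal_def, gaussianReal_apply_eq_integral _ one_ne_zero,
    ENNReal.toReal_ofReal
      (setIntegral_nonneg measurableSet_Iic fun u _ ↦ gaussianPDFReal_nonneg _ _ u),
    Phi_eq_setIntegral]

lemma hasDerivAt_Phi (x : ℝ) : HasDerivAt Phi (gaussianPDFReal 0 1 x) x := by
  have hint (y : ℝ) : IntegrableOn (gaussianPDFReal 0 1) (Iic y) :=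
    (integrable_gaussianPDFReal 0 1).integrableOn
  have hcont : Continuous (gaussianPDFReal 0 1) := by
    rw [gaussianPDFReal_def]; fun_prop
  have hPhi : Phi = fun y ↦ Phi 0 + ∫ u in 0..y, gaussianPDFReal 0 1 u := by
    ext y
    rw [← intervalIntegral.integral_Iic_sub_Iic (hint 0) (hint y), Phi_eq_setIntegral,
      Phi_eq_setIntegral]
    ring
  rw [hPhi]
  exact ((hcont.integral_hasStrictDerivAt 0 x).hasDerivAt).const_add _

lemma HasDerivAt.Phi_sign_mul {α z' x : ℝ} {z : ℝ → ℝ} (hα : α = 1 ∨ α = -1)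
    (hz : HasDerivAt z z' x) :
    HasDerivAt (fun y ↦ Phi (α * z y)) (α * gaussianPDFReal 0 1 (z x) * z') x := by
  refine ((hasDerivAt_Phi _).comp x (hz.const_mul α)).congr_deriv ?_
  rcases hα with rfl | rfl <;> simp [gaussianPDFReal_zero_one_neg]

variable {σ K r r_R t S α : ℝ}

lemma hasDerivAt_zeta1_spot (hK : K ≠ 0) (hS : S ≠ 0) :
    HasDerivAt (fun s ↦ zeta1 σ K r_R t s) ((S * (σ * √t))⁻¹) S := by
  have hlog : HasDerivAt (fun s ↦ log (s / K)) (S⁻¹) S := by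
    refine (((hasDerivAt_id' S).div_const K).log (div_ne_zero hS hK)).congr_deriv ?_
    field_simp
  exact ((hlog.add_const _).div_const (σ * √t)).congr_deriv (by rw [mul_inv, div_eq_mul_inv])

lemma hasDerivAt_zeta2_spot (hK : K ≠ 0) (hS : S ≠ 0) :
    HasDerivAt (fun s ↦ zeta2 σ K r_R t s) ((S * (σ * √t))⁻¹) S :=
  (hasDerivAt_zeta1_spot hK hS).sub_const _

lemma differentiableAt_zeta1_time (hσ : σ ≠ 0) (ht : 0 < t) :
    DifferentiableAt ℝ (fun τ ↦ zeta1 σ K r_R τ S) t := by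
  unfold zeta1
  have : σ * √t ≠ 0 := mul_ne_zero hσ (sqrt_pos.2 ht).ne'
  have hsqrt : DifferentiableAt ℝ (fun τ : ℝ ↦ √τ) t := (hasDerivAt_sqrt ht.ne').differentiableAt
  fun_prop (disch := assumption)

lemma hasDerivAt_zeta2_time (hσ : σ ≠ 0) (ht : 0 < t) :
    HasDerivAt (fun τ ↦ zeta2 σ K r_R τ S)
      (deriv (fun τ ↦ zeta1 σ K r_R τ S) t - σ / (2 * √t)) t := by
  refine ((differentiableAt_zeta1_time hσ ht).hasDerivAt.sub
    ((hasDerivAt_sqrt ht.ne').const_mul σ)).congr_deriv ?_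
  ring

/-- The identity that makes the density terms of the two legs of `BS` cancel in its Greeks. -/
lemma spot_mul_gaussianPDFReal_zeta1 (hσ : σ ≠ 0) (hK : 0 < K) (ht : 0 < t) (hS : 0 < S) :
    S * exp (-(r - r_R) * t) * gaussianPDFReal 0 1 (zeta1 σ K r_R t S)
      = K * exp (-r * t) * gaussianPDFReal 0 1 (zeta2 σ K r_R t S) := by
  set z := zeta1 σ K r_R t S with hz_def
  have hvol : σ * √t ≠ 0 := mul_ne_zero hσ (sqrt_pos.2 ht).ne'
  have hz : z * (σ * √t) = log S - log K + (r_R + σ ^ 2 / 2) * t := by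
    rw [hz_def, zeta1, div_mul_cancel₀ _ hvol, log_div hS.ne' hK.ne']
  have hexp : -(z - σ * √t) ^ 2 / 2 = -z ^ 2 / 2 + (log S - log K + r_R * t) := by
    linear_combination hz - σ ^ 2 / 2 * sq_sqrt ht.le
  rw [zeta2, gaussianPDFReal_zero_one, gaussianPDFReal_zero_one, ← hz_def, hexp]
  calc S * exp (-(r - r_R) * t) * ((√(2 * π))⁻¹ * exp (-z ^ 2 / 2))
      = (√(2 * π))⁻¹ * exp (log S + -(r - r_R) * t + -z ^ 2 / 2) := by
        rw [exp_add, exp_add, exp_log hS]; ring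
    _ = (√(2 * π))⁻¹ * exp (log K + -r * t + (-z ^ 2 / 2 + (log S - log K + r_R * t))) := by
        ring_nf
    _ = _ := by rw [exp_add, exp_add, exp_log hK]; ring

lemma hasDerivAt_BS_spot (hσ : σ ≠ 0) (hK : 0 < K) (hα : α = 1 ∨ α = -1) (ht : 0 < t)
    (hS : 0 < S) :
    HasDerivAt (fun s ↦ BS σ K r r_R α t s)
      (α * exp (-(r - r_R) * t) * Phi (α * zeta1 σ K r_R t S)) S := by
  have hΦ₁ := (hasDerivAt_zeta1_spot (σ := σ) (r_R := r_R) (t := t) hK.ne' hS.ne').Phi_sign_mul hα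
  have hΦ₂ := (hasDerivAt_zeta2_spot (σ := σ) (r_R := r_R) (t := t) hK.ne' hS.ne').Phi_sign_mul hα
  have hlin : HasDerivAt (fun s ↦ α * s * exp (-(r - r_R) * t)) (α * exp (-(r - r_R) * t)) S := by
    simpa using ((hasDerivAt_id S).const_mul α).mul_const (exp (-(r - r_R) * t))
  refine ((hlin.mul hΦ₁).sub (hΦ₂.const_mul (α * K * exp (-r * t)))).congr_deriv ?_
  linear_combination α ^ 2 * (S * (σ * √t))⁻¹ * spot_mul_gaussianPDFReal_zeta1 (r := r) hσ hK ht hS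

lemma hasDerivAt_deriv_BS_spot (hσ : σ ≠ 0) (hK : 0 < K) (hα : α = 1 ∨ α = -1) (ht : 0 < t)
    (hS : 0 < S) :
    HasDerivAt (deriv fun s ↦ BS σ K r r_R α t s)
      (exp (-(r - r_R) * t) * gaussianPDFReal 0 1 (zeta1 σ K r_R t S) * (S * (σ * √t))⁻¹) S := by
  have hdelta : (deriv fun s ↦ BS σ K r r_R α t s)
      =ᶠ[𝓝 S] fun s ↦ α * exp (-(r - r_R) * t) * Phi (α * zeta1 σ K r_R t s) := by
    filter_upwards [Ioi_mem_nhds hS] with s hs using (hasDerivAt_BS_spot hσ hK hα ht hs).deriv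
  refine ((((hasDerivAt_zeta1_spot hK.ne' hS.ne').Phi_sign_mul hα).const_mul _)
    |>.congr_of_eventuallyEq hdelta).congr_deriv ?_
  linear_combination exp (-(r - r_R) * t) * gaussianPDFReal 0 1 (zeta1 σ K r_R t S) *
    (S * (σ * √t))⁻¹ * sq_eq_one_iff.2 hα

lemma hasDerivAt_BS_time (hσ : σ ≠ 0) (hK : 0 < K) (hα : α = 1 ∨ α = -1) (ht : 0 < t)
    (hS : 0 < S) :
    HasDerivAt (fun τ ↦ BS σ K r r_R α τ S)
      (-(r - r_R) * (α * S * exp (-(r - r_R) * t) * Phi (α * zeta1 σ K r_R t S))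
        + r * (α * K * exp (-r * t) * Phi (α * zeta2 σ K r_R t S))
        + S * exp (-(r - r_R) * t) * gaussianPDFReal 0 1 (zeta1 σ K r_R t S) * (σ / (2 * √t)))
      t := by
  have hΦ₁ := (differentiableAt_zeta1_time (K := K) (r_R := r_R) (S := S) hσ ht).hasDerivAt
    |>.Phi_sign_mul hα
  have hΦ₂ := (hasDerivAt_zeta2_time (K := K) (r_R := r_R) (S := S) hσ ht).Phi_sign_mul hα
  have hdisc (a c : ℝ) : HasDerivAt (fun τ ↦ c * exp (a * τ)) (c * (exp (a * t) * a)) t := by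
    simpa using (((hasDerivAt_id t).const_mul a).exp).const_mul c
  refine (((hdisc _ (α * S)).mul hΦ₁).sub ((hdisc (-r) (α * K)).mul hΦ₂)).congr_deriv ?_
  have hkey := spot_mul_gaussianPDFReal_zeta1 (r := r) (r_R := r_R) hσ hK ht hS
  linear_combination (α ^ 2 * deriv (fun τ ↦ zeta1 σ K r_R τ S) t - σ / (2 * √t)) * hkey
    + σ / (2 * √t) * (K * exp (-r * t) * gaussianPDFReal 0 1 (zeta2 σ K r_R t S))
      * sq_eq_one_iff.2 hα

theorem BS_solves_pde (hσ : σ ≠ 0) (hK : 0 < K) (hα : α = 1 ∨ α = -1) (ht : 0 < t) (hS : 0 < S) :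
    deriv (fun τ ↦ BS σ K r r_R α τ S) t
      - σ ^ 2 * S ^ 2 / 2 * deriv (deriv fun s ↦ BS σ K r r_R α t s) S
      - r_R * S * deriv (fun s ↦ BS σ K r r_R α t s) S + r * BS σ K r r_R α t S = 0 := by
  rw [(hasDerivAt_BS_time hσ hK hα ht hS).deriv, (hasDerivAt_deriv_BS_spot hσ hK hα ht hS).deriv,
    (hasDerivAt_BS_spot hσ hK hα ht hS).deriv, BS]
  have : √t ≠ 0 := (sqrt_pos.2 ht).ne'
  field_simp
  ring

lemma tendsto_Phi_atBot : Tendsto Phi atBot (𝓝 0) := by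
  simpa only [← funext Phi_eq_cdf] using tendsto_cdf_atBot (gaussianReal 0 1)

lemma tendsto_zeta1_nhdsGT_zero (hσ : 0 < σ) (hK : 0 < K) (ht : 0 < t) :
    Tendsto (fun s ↦ zeta1 σ K r_R t s) (𝓝[>] 0) atBot := by
  have hdiv : Tendsto (fun s ↦ s / K) (𝓝[>] 0) (𝓝[>] 0) :=
    tendsto_nhdsWithin_iff.2
      ⟨((continuous_id.div_const K).tendsto' 0 0 (zero_div K)).mono_left nhdsWithin_le_nhds,
        eventually_nhdsWithin_of_forall fun s hs ↦ div_pos hs hK⟩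
  exact (tendsto_atBot_add_const_right _ _ (tendsto_log_nhdsGT_zero.comp hdiv)).atBot_div_const
    (mul_pos hσ (sqrt_pos.2 ht))

lemma tendsto_BS_call_nhdsGT_zero (hσ : 0 < σ) (hK : 0 < K) (ht : 0 < t) :
    Tendsto (fun s ↦ BS σ K r r_R 1 t s) (𝓝[>] 0) (𝓝 0) := by
  have hζ₁ := tendsto_zeta1_nhdsGT_zero (r_R := r_R) hσ hK ht
  have hΦ₁ := tendsto_Phi_atBot.comp hζ₁
  have hΦ₂ := tendsto_Phi_atBot.comp (tendsto_atBot_add_const_right _ (-(σ * √t)) hζ₁)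
  have hid : Tendsto (fun s : ℝ ↦ s) (𝓝[>] 0) (𝓝 0) := tendsto_nhdsWithin_of_tendsto_nhds tendsto_id
  simpa [BS, zeta2, sub_eq_add_neg, Function.comp_def] using
    ((hid.mul_const (exp (-(r - r_R) * t))).mul hΦ₁).sub (hΦ₂.const_mul (K * exp (-r * t)))

lemma monotoneOn_BS_call (hσ : 0 < σ) (hK : 0 < K) (ht : 0 < t) :
    MonotoneOn (fun s ↦ BS σ K r r_R 1 t s) (Ioi 0) := by
  have hdelta (s : ℝ) (hs : s ∈ Ioi 0) : HasDerivAt (fun s ↦ BS σ K r r_R 1 t s)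
      (exp (-(r - r_R) * t) * Phi (zeta1 σ K r_R t s)) s := by
    simpa using hasDerivAt_BS_spot hσ.ne' hK (Or.inl rfl) ht hs
  refine monotoneOn_of_hasDerivWithinAt_nonneg (convex_Ioi 0)
    (f' := fun s ↦ exp (-(r - r_R) * t) * Phi (zeta1 σ K r_R t s))
    (fun s hs ↦ (hdelta s hs).continuousAt.continuousWithinAt) ?_ ?_ <;> rw [interior_Ioi]
  · exact fun s hs ↦ (hdelta s hs).hasDerivWithinAt
  · exact fun s _ ↦ mul_nonneg (exp_pos _).le (Phi_eq_cdf _ ▸ cdf_nonneg _ _)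

lemma BS_call_nonneg (hσ : 0 < σ) (hK : 0 < K) (ht : 0 < t) (hS : 0 < S) :
    0 ≤ BS σ K r r_R 1 t S := by
  refine le_of_tendsto (tendsto_BS_call_nhdsGT_zero (r := r) (r_R := r_R) hσ hK ht) ?_
  filter_upwards [Ioo_mem_nhdsGT hS] with s hs
  exact monotoneOn_BS_call hσ hK ht hs.1 hS hs.2.le

lemma zeta1_swap (hσ : σ ≠ 0) (ht : 0 < t) :
    zeta1 σ S (-r_R) t K = -zeta2 σ K r_R t S := by
  have : √t ≠ 0 := (sqrt_pos.2 ht).ne'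
  have hlog : log (K / S) = -log (S / K) := by rw [← log_inv, inv_div]
  rw [zeta2, zeta1, zeta1, hlog]
  field_simp
  linear_combination -2 * σ ^ 2 * sq_sqrt ht.le

lemma zeta2_swap (hσ : σ ≠ 0) (ht : 0 < t) :
    zeta2 σ S (-r_R) t K = -zeta1 σ K r_R t S := by
  rw [zeta2, zeta1_swap hσ ht, zeta2]
  ring

lemma BS_put_eq_call (hσ : σ ≠ 0) (ht : 0 < t) :
    BS σ K r r_R (-1) t S = BS σ S (r - r_R) (-r_R) 1 t K := by
  rw [BS, BS, zeta1_swap hσ ht, zeta2_swap hσ ht, show -(r - r_R - -r_R) * t = -r * t by ring]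
  simp only [neg_one_mul, one_mul]
  ring

lemma BS_nonneg (hσ : 0 < σ) (hK : 0 < K) (hα : α = 1 ∨ α = -1) (ht : 0 < t) (hS : 0 < S) :
    0 ≤ BS σ K r r_R α t S := by
  rcases hα with rfl | rfl
  · exact BS_call_nonneg hσ hK ht hS
  · exact BS_put_eq_call hσ.ne' ht ▸ BS_call_nonneg hσ hS ht hK

lemma fXVA_of_nonneg {lB lC RB RC v : ℝ} (hv : 0 ≤ v) :
    fXVA lB lC RB RC v = (lB * (1 - RB) + lC * (1 - RC)) * v := by
  rw [fXVA, min_eq_right hv, max_eq_left hv]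
  ring

theorem riskyBS_solves_risky_pde_general
    (σ K r r_R T α lB lC RB RC : ℝ)
    (hσ : 0 < σ) (hK : 0 < K) (hα : α = 1 ∨ α = -1)
    (BShat : ℝ → ℝ → ℝ)
    (hBShat : ∀ t S, BShat t S =
      BS σ K r r_R α t S * Real.exp (-(lB * (1 - RB) + lC * (1 - RC)) * t)) :
    ∀ t ∈ Set.Ioo 0 T, ∀ S ∈ Set.Ioi (0 : ℝ),
      deriv (fun τ => BShat τ S) t
        - σ ^ 2 * S ^ 2 / 2 * deriv (deriv (fun s => BShat t s)) S
        - r_R * S * deriv (fun s => BShat t s) S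
        + r * BShat t S + fXVA lB lC RB RC (BShat t S) = 0 := by
  rintro t ⟨ht, -⟩ S (hS : 0 < S)
  set c := lB * (1 - RB) + lC * (1 - RC)
  obtain rfl : BShat = fun τ s ↦ BS σ K r r_R α τ s * exp (-c * τ) := funext₂ hBShat
  have htime : deriv (fun τ ↦ BS σ K r r_R α τ S * exp (-c * τ)) t
      = deriv (fun τ ↦ BS σ K r r_R α τ S) t * exp (-c * t)
        - c * (BS σ K r r_R α t S * exp (-c * t)) := by
    have h : HasDerivAt (fun τ ↦ BS σ K r r_R α τ S * exp (-c * τ)) _ t :=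
      (hasDerivAt_BS_time hσ.ne' hK hα ht hS).differentiableAt.hasDerivAt.mul
        (((hasDerivAt_id' t).const_mul (-c)).exp)
    rw [h.deriv]
    ring
  simp only [htime, deriv_mul_const_field', fXVA_of_nonneg
    (mul_nonneg (BS_nonneg hσ hK hα ht hS) (exp_pos _).le)]
  linear_combination exp (-c * t) * BS_solves_pde hσ.ne' hK hα ht hS

/-- The risky Black–Scholes formula
`𝓑𝓢̂(t,S) = 𝓑𝓢(t,S) e^{−(λ_B(1−R_B)+λ_C(1−R_C))t}` satisfies the risky
(nonlinear) Black–Scholes equation on `(0,T)×(0,∞)`. -/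
theorem riskyBS_solves_risky_pde
    (σ K r r_R T α lB lC RB RC : ℝ)
    (hσ : 0 < σ) (hK : 0 < K) (hT : 0 < T) (hα : α = 1 ∨ α = -1)
    (hlB : 0 ≤ lB) (hlC : 0 ≤ lC)
    (hRB : RB ∈ Set.Icc (0 : ℝ) 1) (hRC : RC ∈ Set.Icc (0 : ℝ) 1)
    (BShat : ℝ → ℝ → ℝ)
    (hBShat : ∀ t S, BShat t S =
      BS σ K r r_R α t S * Real.exp (-(lB * (1 - RB) + lC * (1 - RC)) * t)) :
    ∀ t ∈ Set.Ioo 0 T, ∀ S ∈ Set.Ioi (0 : ℝ),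
      deriv (fun τ => BShat τ S) t
        - σ ^ 2 * S ^ 2 / 2 * deriv (deriv (fun s => BShat t s)) S
        - r_R * S * deriv (fun s => BShat t s) S
        + r * BShat t S + fXVA lB lC RB RC (BShat t S) = 0 :=
  riskyBS_solves_risky_pde_general σ K r r_R T α lB lC RB RC hσ hK hα BShat hBShat
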